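/- In the proof that the maximal antichain structure is detected by dense sets: let P be a perfect poset, D ⊆ P dense. Then the set E of conditions q in the finite-support ω-product of ℚ(P) such that q(k) = (T, n) with T_s ∈ D for every s ∈ 2ⁿ ∩ T, is dense in ℚ(P)^{<ω}. -/

import Mathlib

def IsTree (T : Set (List Bool)) : Prop := ∀ s t : List Bool, t ∈ T → s <+: t → s ∈ T

def IsPerfectTree (T : Set (List Bool)) : Prop :=
  T.Nonempty ∧ IsTree T ∧
    ∀ s ∈ T, ∃ t₁ ∈ T, ∃ t₂ ∈ T, s <+: t₁ ∧ s <+: t₂ ∧ ¬(t₁ <+: t₂ ∨ t₂ <+: t₁)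

def cohenCond (t : List Bool) : Set (List Bool) := {s | s <+: t ∨ t <+: s}

def IsPerfectPoset (P : Set (Set (List Bool))) : Prop :=
  (∀ T ∈ P, IsPerfectTree T) ∧ (∀ t : List Bool, cohenCond t ∈ P) ∧
  (∀ S ∈ P, ∀ T ∈ P, S ∪ T ∈ P) ∧
  (∀ S ∈ P, ∀ T ∈ P, ∀ M : Set (List Bool),
    IsGreatest {M' | IsPerfectTree M' ∧ M' ⊆ S ∩ T} M → M ∈ P)

/-- `T_s = {v ∈ T : v ⊆ s ∨ s ⊆ v}`. -/
def nodeRestrict (T : Set (List Bool)) (s : List Bool) : Set (List Bool) :=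
  {v ∈ T | v <+: s ∨ s <+: v}

/-- `2^n ∩ T`: the nodes of `T` of length `n`. -/
def level (T : Set (List Bool)) (n : ℕ) : Set (List Bool) := {s ∈ T | s.length = n}

/-- The order of `ℚ(P)`: `(S,n) ≤ (T,m)` iff `S ⊆ T`, `m ≤ n`, `2^m ∩ S = 2^m ∩ T`. -/
def qLE (p q : Set (List Bool) × ℕ) : Prop :=
  p.1 ⊆ q.1 ∧ q.2 ≤ p.2 ∧ level p.1 q.2 = level q.1 q.2

/-- Conditions of the finite-support ω-product `ℚ(P)^{<ω}`. -/
def ProdCond : Type := ℕ → Option (Set (List Bool) × ℕ)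

def dom (q : ProdCond) : Set ℕ := {i | q i ≠ none}

def FinSupp (q : ProdCond) : Prop := (dom q).Finite

def Valid (P : Set (Set (List Bool))) (q : ProdCond) : Prop :=
  ∀ i a, q i = some a → a.1 ∈ P

def prodLE (p q : ProdCond) : Prop :=
  ∀ i a, q i = some a → ∃ b, p i = some b ∧ qLE b a

/-- Density of `D` in the perfect poset `P` (ordered by inclusion). -/
def DenseIn (D P : Set (Set (List Bool))) : Prop :=
  D ⊆ P ∧ ∀ T ∈ P, ∃ S ∈ D, S ⊆ T

/-! The new `k`-th coordinate keeps the stem length `n` of the old one `(T, n)` (or is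
`(2^{<ω}, 0)` if `k` was not in the support). Below each node `s` of `T` of length `n`, density
of `D` provides `S_s ⊆ T_s` in `D`; since `T_s = T ∩ [s]` is again in `P`, so is the finite union
`S = ⋃ S_s`. Distinct nodes of length `n` are incomparable, so `S` has the same level-`n` nodes as
`T` and `S_s` is exactly the restriction of `S` to `s`. -/

theorem eq_of_mem_cohenCond_of_prefix {s t v : List Bool} (hv : v ∈ cohenCond s) (htv : t <+: v)
    (hlen : t.length = s.length) : t = s := by
  rcases hv with hvs | hsv
  · exact (htv.trans hvs).eq_of_length hlen
  · rcases List.prefix_or_prefix_of_prefix htv hsv with hts | hst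
    · exact hts.eq_of_length hlen
    · exact (hst.eq_of_length hlen.symm).symm

theorem level_finite (T : Set (List Bool)) (n : ℕ) : (level T n).Finite :=
  (List.finite_length_eq Bool n).subset fun _ hs => hs.2

namespace IsPerfectTree

variable {T : Set (List Bool)}

theorem exists_le_length (hT : IsPerfectTree T) (m : ℕ) : ∃ t ∈ T, m ≤ t.length := by
  obtain ⟨⟨t₀, ht₀⟩, -, hsplit⟩ := hT
  induction m with
  | zero => exact ⟨t₀, ht₀, Nat.zero_le _⟩
  | succ m ih =>
    obtain ⟨t, ht, hlen⟩ := ih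
    obtain ⟨t₁, ht₁, t₂, -, htt₁, htt₂, hinc⟩ := hsplit t ht
    have hne : t.length ≠ t₁.length := fun h => hinc (Or.inl (htt₁.eq_of_length h ▸ htt₂))
    exact ⟨t₁, ht₁, by have := htt₁.length_le; omega⟩

theorem level_nonempty (hT : IsPerfectTree T) (n : ℕ) : (level T n).Nonempty := by
  obtain ⟨t, ht, hlen⟩ := hT.exists_le_length n
  exact ⟨t.take n, hT.2.1 _ _ ht (List.take_prefix _ _), by simp [hlen]⟩

theorem nodeRestrict (hT : IsPerfectTree T) {s : List Bool} (hs : s ∈ T) :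
    IsPerfectTree (nodeRestrict T s) := by
  obtain ⟨-, htree, hsplit⟩ := hT
  refine ⟨⟨s, hs, Or.inl List.prefix_rfl⟩, ?_, ?_⟩
  · rintro u v ⟨hv, hvs | hsv⟩ huv
    · exact ⟨htree _ _ hv huv, Or.inl (huv.trans hvs)⟩
    · refine ⟨htree _ _ hv huv, ?_⟩
      rcases le_total u.length s.length with hl | hl
      · exact Or.inl (List.prefix_of_prefix_length_le huv hsv hl)
      · exact Or.inr (List.prefix_of_prefix_length_le hsv huv hl)
  · rintro v ⟨hv, hvs | hsv⟩
    · obtain ⟨t₁, ht₁, t₂, ht₂, hst₁, hst₂, hinc⟩ := hsplit s hs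
      exact ⟨t₁, ⟨ht₁, Or.inr hst₁⟩, t₂, ⟨ht₂, Or.inr hst₂⟩, hvs.trans hst₁, hvs.trans hst₂, hinc⟩
    · obtain ⟨t₁, ht₁, t₂, ht₂, hvt₁, hvt₂, hinc⟩ := hsplit v hv
      exact ⟨t₁, ⟨ht₁, Or.inr (hsv.trans hvt₁)⟩, t₂, ⟨ht₂, Or.inr (hsv.trans hvt₂)⟩,
        hvt₁, hvt₂, hinc⟩

/-- A perfect subtree of `[s]` contains `s`, since it branches above some node, and two
incomparable nodes cannot both lie below `s`. -/
theorem mem_of_subset_cohenCond (hT : IsPerfectTree T) {s : List Bool}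
    (hsub : T ⊆ cohenCond s) : s ∈ T := by
  obtain ⟨⟨v, hv⟩, htree, hsplit⟩ := hT
  obtain ⟨t₁, ht₁, t₂, ht₂, -, -, hinc⟩ := hsplit v hv
  rcases hsub ht₁ with ht₁s | hst₁
  · rcases hsub ht₂ with ht₂s | hst₂
    · exact absurd (List.prefix_or_prefix_of_prefix ht₁s ht₂s) hinc
    · exact htree _ _ ht₂ hst₂
  · exact htree _ _ ht₁ hst₁

end IsPerfectTree

namespace IsPerfectPoset

variable {P : Set (Set (List Bool))}

theorem nodeRestrict_mem (hP : IsPerfectPoset P) {T : Set (List Bool)} (hT : T ∈ P)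
    {s : List Bool} (hs : s ∈ T) : nodeRestrict T s ∈ P :=
  hP.2.2.2 T hT (cohenCond s) (hP.2.1 s) _
    ⟨⟨(hP.1 T hT).nodeRestrict hs, subset_rfl⟩, fun _ hM => hM.2⟩

theorem biUnion_mem (hP : IsPerfectPoset P) {F : Set (List Bool)} (hF : F.Finite)
    (hne : F.Nonempty) {f : List Bool → Set (List Bool)} (hf : ∀ s ∈ F, f s ∈ P) :
    ⋃ s ∈ F, f s ∈ P := by
  have h := Finset.sup'_mem P hP.2.2.1 hF.toFinset (hF.toFinset_nonempty.2 hne) f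
    (by simpa using hf)
  simpa [Finset.sup'_eq_sup, Finset.sup_set_eq_biUnion] using h

end IsPerfectPoset

section LevelUnion

variable {F : Set (List Bool)} {n : ℕ} {f : List Bool → Set (List Bool)}

theorem level_biUnion_of_subset_cohenCond (hF : ∀ s ∈ F, s.length = n)
    (hf : ∀ s ∈ F, f s ⊆ cohenCond s) (hmem : ∀ s ∈ F, s ∈ f s) :
    level (⋃ s ∈ F, f s) n = F := by
  ext v
  constructor
  · rintro ⟨hv, hlen⟩
    obtain ⟨s, hs, hvs⟩ := Set.mem_iUnion₂.1 hv
    rwa [eq_of_mem_cohenCond_of_prefix (hf s hs hvs) List.prefix_rfl (hlen.trans (hF s hs).symm)]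
  · intro hv
    exact ⟨Set.mem_biUnion hv (hmem v hv), hF v hv⟩

theorem nodeRestrict_biUnion_of_subset_cohenCond (hF : ∀ s ∈ F, s.length = n)
    (hf : ∀ s ∈ F, f s ⊆ cohenCond s) {t : List Bool} (ht : t ∈ F) (htree : IsTree (f t))
    (htmem : t ∈ f t) : nodeRestrict (⋃ s ∈ F, f s) t = f t := by
  ext v
  constructor
  · rintro ⟨hv, hvt | htv⟩
    · exact htree _ _ htmem hvt
    · obtain ⟨s, hs, hvs⟩ := Set.mem_iUnion₂.1 hv
      rwa [eq_of_mem_cohenCond_of_prefix (hf s hs hvs) htv ((hF t ht).trans (hF s hs).symm)]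
  · intro hv
    exact ⟨Set.mem_biUnion ht hv, hf t ht hv⟩

end LevelUnion

theorem IsPerfectPoset.exists_qLE_forall_nodeRestrict_mem {P D : Set (Set (List Bool))}
    (hP : IsPerfectPoset P) (hD : DenseIn D P) {T : Set (List Bool)} (hT : T ∈ P) (n : ℕ) :
    ∃ S ∈ P, qLE (S, n) (T, n) ∧ ∀ s ∈ level S n, nodeRestrict S s ∈ D := by
  choose! f hfD hfT using fun s (hs : s ∈ level T n) => hD.2 _ (hP.nodeRestrict_mem hT hs.1)
  have hfP : ∀ s ∈ level T n, f s ∈ P := fun s hs => hD.1 (hfD s hs)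
  have hlen : ∀ s ∈ level T n, s.length = n := fun s hs => hs.2
  have hf : ∀ s ∈ level T n, f s ⊆ cohenCond s := fun s hs => (hfT s hs).trans fun _ hv => hv.2
  have hmem : ∀ s ∈ level T n, s ∈ f s := fun s hs =>
    (hP.1 _ (hfP s hs)).mem_of_subset_cohenCond (hf s hs)
  have hlevel := level_biUnion_of_subset_cohenCond hlen hf hmem
  refine ⟨⋃ s ∈ level T n, f s,
    hP.biUnion_mem (level_finite T n) ((hP.1 T hT).level_nonempty n) hfP,
    ⟨Set.iUnion₂_subset fun s hs => (hfT s hs).trans (Set.sep_subset _ _), le_rfl, hlevel⟩, ?_⟩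
  rw [hlevel]
  intro s hs
  rw [nodeRestrict_biUnion_of_subset_cohenCond hlen hf hs (hP.1 _ (hfP s hs)).2.1 (hmem s hs)]
  exact hfD s hs

section ProdCond

variable {q : ProdCond} {k : ℕ}

theorem FinSupp.update (hq : FinSupp q) (k : ℕ) (x : Option (Set (List Bool) × ℕ)) :
    FinSupp (Function.update q k x) := by
  refine (hq.insert k).subset fun i hi => ?_
  rcases eq_or_ne i k with h | h
  · exact Or.inl h
  · exact Or.inr fun hqi => hi ((Function.update_of_ne h _ _).trans hqi)

theorem Valid.update {P : Set (Set (List Bool))} (hq : Valid P q) {b : Set (List Bool) × ℕ}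
    (hb : b.1 ∈ P) : Valid P (Function.update q k (some b)) := by
  intro i a ha
  rcases eq_or_ne i k with rfl | h
  · obtain rfl := Option.some_inj.1 ((Function.update_self (f := q) ..).symm.trans ha)
    exact hb
  · exact hq i a ((Function.update_of_ne h ..).symm.trans ha)

theorem prodLE_update {b : Set (List Bool) × ℕ} (hb : ∀ a, q k = some a → qLE b a) :
    prodLE (Function.update q k (some b)) q := by
  intro i a ha
  rcases eq_or_ne i k with rfl | h
  · exact ⟨b, Function.update_self .., hb a ha⟩
  · exact ⟨a, (Function.update_of_ne h ..).trans ha, subset_rfl, le_rfl, rfl⟩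

end ProdCond

/-- for a perfect poset `P`, dense `D ⊆ P`, and `k ∈ ω`, the set
`E = {q ∈ ℚ(P)^{<ω} : q(k) = (T,n) ∧ ∀ s ∈ 2ⁿ ∩ T, T_s ∈ D}` is dense in the
finite-support ω-product `ℚ(P)^{<ω}`. -/
theorem E_is_dense (P : Set (Set (List Bool))) (hP : IsPerfectPoset P)
    (D : Set (Set (List Bool))) (hD : DenseIn D P) (k : ℕ) :
    ∀ q : ProdCond, FinSupp q → Valid P q →
      ∃ q' : ProdCond, FinSupp q' ∧ Valid P q' ∧ prodLE q' q ∧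
        ∃ T n, q' k = some (T, n) ∧ ∀ s ∈ level T n, nodeRestrict T s ∈ D := by
  intro q hq hqv
  obtain ⟨T, n, hT, hqk⟩ : ∃ T n, T ∈ P ∧ ∀ a, q k = some a → a = (T, n) := by
    rcases hqk : q k with _ | ⟨T, n⟩
    · exact ⟨cohenCond [], 0, hP.2.1 [], by simp⟩
    · exact ⟨T, n, hqv k _ hqk, by simp⟩
  obtain ⟨S, hS, hST, hSD⟩ := hP.exists_qLE_forall_nodeRestrict_mem hD hT n
  exact ⟨Function.update q k (some (S, n)), hq.update k _, hqv.update hS,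
    prodLE_update fun a ha => hqk a ha ▸ hST, S, n, Function.update_self .., hSD⟩
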